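/- For all x > 0, Erf(x/√2) ≤ 1 − (2/(x + √(4 + x²))) · √(2/π) · e^{−x²/2}. -/

import Mathlib

/-- The Gauss error function. -/
noncomputable def erf (x : ℝ) : ℝ := (2 / Real.sqrt Real.pi) * ∫ t in (0:ℝ)..x, Real.exp (-t ^ 2)

/-! Mills' ratio `R(y) = e^{y²/2} ∫_y^∞ e^{-t²/2} dt` solves `R' = y R - 1`. Birnbaum's
`g(y) = 2 / (y + √(4 + y²))` is a subsolution, `g' ≥ y g - 1`, and tends to `0`, so
`y ↦ ∫_x^y e^{-t²/2} dt + g(y) e^{-y²/2}` is nondecreasing; letting `y → ∞` gives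
`g(x) e^{-x²/2} ≤ ∫_x^∞ e^{-t²/2} dt`. The substitution `t ↦ t / √2` and
`∫_0^∞ e^{-t²/2} dt = √(2π) / 2` turn `erf (x / √2)` into `1 - √(2/π) ∫_x^∞ e^{-t²/2} dt`. -/

open Real MeasureTheory Set Filter Topology

lemma integrable_exp_neg_sq_div_two : Integrable fun t : ℝ => exp (-t ^ 2 / 2) := by
  simpa [neg_div, div_eq_inv_mul] using integrable_exp_neg_mul_sq (b := 1 / 2) (by norm_num)

lemma integral_Ioi_zero_exp_neg_sq_div_two :
    ∫ t in Ioi (0 : ℝ), exp (-t ^ 2 / 2) = √(2 * π) / 2 := by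
  simpa [neg_div, div_eq_inv_mul, mul_comm] using integral_gaussian_Ioi (1 / 2)

lemma mul_exp_le_integral_Ioi_of_hasDerivAt {g g' : ℝ → ℝ} (hg : ∀ y, HasDerivAt g (g' y) y)
    (hg' : ∀ y, y * g y - 1 ≤ g' y)
    (hlim : Tendsto (fun y => g y * exp (-y ^ 2 / 2)) atTop (𝓝 0)) (x : ℝ) :
    g x * exp (-x ^ 2 / 2) ≤ ∫ t in Ioi x, exp (-t ^ 2 / 2) := by
  set φ : ℝ → ℝ := fun y => (∫ t in x..y, exp (-t ^ 2 / 2)) + g y * exp (-y ^ 2 / 2)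
  have hcont : Continuous fun t : ℝ => exp (-t ^ 2 / 2) := by fun_prop
  have hφ : ∀ y, HasDerivAt φ (exp (-y ^ 2 / 2) * (1 + g' y - y * g y)) y := by
    intro y
    have hexp : HasDerivAt (fun y : ℝ => exp (-y ^ 2 / 2)) (exp (-y ^ 2 / 2) * -y) y := by
      have : HasDerivAt (fun y : ℝ => -y ^ 2 / 2) (-y) y :=
        ((hasDerivAt_pow 2 y).fun_neg.div_const 2).congr_deriv (by push_cast; ring)
      exact this.exp
    exact ((hcont.integral_hasStrictDerivAt x y).hasDerivAt.fun_add
      ((hg y).fun_mul hexp)).congr_deriv (by ring)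
  have hmono : Monotone φ := by
    refine monotone_of_deriv_nonneg (fun y => (hφ y).differentiableAt) fun y => ?_
    rw [(hφ y).deriv]
    exact mul_nonneg (exp_pos _).le (by linarith [hg' y])
  have hlimφ : Tendsto φ atTop (𝓝 (∫ t in Ioi x, exp (-t ^ 2 / 2))) := by
    simpa using (intervalIntegral_tendsto_integral_Ioi x
      integrable_exp_neg_sq_div_two.integrableOn tendsto_id).add hlim
  have hφx : φ x = g x * exp (-x ^ 2 / 2) := by simp [φ]
  exact hφx ▸ ge_of_tendsto hlimφ (eventually_ge_atTop x |>.mono fun y hy => hmono hy)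

noncomputable def birnbaumRatio (y : ℝ) : ℝ := 2 / (y + √(4 + y ^ 2))

lemma add_sqrt_four_add_sq_pos (y : ℝ) : 0 < y + √(4 + y ^ 2) := by
  have : |y| < √(4 + y ^ 2) := (lt_sqrt (abs_nonneg y)).2 (by rw [sq_abs]; linarith)
  linarith [neg_abs_le y]

lemma hasDerivAt_birnbaumRatio (y : ℝ) :
    HasDerivAt birnbaumRatio (-birnbaumRatio y / √(4 + y ^ 2)) y := by
  have hsq : HasDerivAt (fun y : ℝ => √(4 + y ^ 2)) (y / √(4 + y ^ 2)) y := by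
    refine (((hasDerivAt_pow 2 y).const_add 4).sqrt (by positivity)).congr_deriv ?_
    field_simp
    push_cast
    ring
  refine (((hasDerivAt_id y).fun_add hsq).fun_inv (add_sqrt_four_add_sq_pos y).ne').const_mul 2
    |>.congr_deriv ?_
  have hpos := add_sqrt_four_add_sq_pos y
  simp only [birnbaumRatio, id]
  field_simp
  ring

lemma mul_birnbaumRatio_sub_one_le (y : ℝ) :
    y * birnbaumRatio y - 1 ≤ -birnbaumRatio y / √(4 + y ^ 2) := by
  have hs2 : √(4 + y ^ 2) ^ 2 = 4 + y ^ 2 := sq_sqrt (by positivity)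
  have hpos := add_sqrt_four_add_sq_pos y
  rw [birnbaumRatio, ← sub_nonneg]
  field_simp
  nlinarith [sq_nonneg (√(4 + y ^ 2) - y)]

lemma tendsto_birnbaumRatio_atTop : Tendsto birnbaumRatio atTop (𝓝 0) :=
  tendsto_const_nhds.div_atTop
    (tendsto_atTop_mono (fun _ => le_add_of_nonneg_right (sqrt_nonneg _)) tendsto_id)

lemma tendsto_exp_neg_sq_div_two_atTop : Tendsto (fun y : ℝ => exp (-y ^ 2 / 2)) atTop (𝓝 0) :=
  tendsto_exp_atBot.comp
    ((tendsto_neg_atTop_atBot.comp (tendsto_pow_atTop two_ne_zero)).atBot_div_const two_pos)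

lemma birnbaumRatio_mul_exp_le_integral_Ioi (x : ℝ) :
    birnbaumRatio x * exp (-x ^ 2 / 2) ≤ ∫ t in Ioi x, exp (-t ^ 2 / 2) :=
  mul_exp_le_integral_Ioi_of_hasDerivAt hasDerivAt_birnbaumRatio mul_birnbaumRatio_sub_one_le
    (by simpa using tendsto_birnbaumRatio_atTop.mul tendsto_exp_neg_sq_div_two_atTop) x

lemma erf_div_sqrt_two (x : ℝ) :
    erf (x / √2) = 1 - √(2 / π) * ∫ t in Ioi x, exp (-t ^ 2 / 2) := by
  have hsub : ∫ t in (0 : ℝ)..x, exp (-t ^ 2 / 2) = √2 * ∫ t in (0 : ℝ)..x / √2, exp (-t ^ 2) := by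
    have := intervalIntegral.integral_comp_div (fun t => exp (-t ^ 2)) (a := 0) (b := x)
      (sqrt_ne_zero'.2 two_pos)
    simpa only [div_pow, sq_sqrt zero_le_two, zero_div, smul_eq_mul, neg_div] using this
  have hsplit :
      ∫ t in (0 : ℝ)..x, exp (-t ^ 2 / 2) = √(2 * π) / 2 - ∫ t in Ioi x, exp (-t ^ 2 / 2) := by
    rw [← integral_Ioi_zero_exp_neg_sq_div_two, intervalIntegral.integral_Ioi_sub_Ioi'
      integrable_exp_neg_sq_div_two.integrableOn integrable_exp_neg_sq_div_two.integrableOn]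
  have hsqrt2 : √2 ^ 2 = 2 := sq_sqrt zero_le_two
  rw [hsub, sqrt_mul zero_le_two] at hsplit
  rw [erf, sqrt_div zero_le_two]
  generalize (∫ t in (0 : ℝ)..x / √2, exp (-t ^ 2)) = I at hsplit ⊢
  generalize (∫ t in Ioi x, exp (-t ^ 2 / 2)) = T at hsplit ⊢
  field_simp
  linear_combination √2 * hsplit + (√π / 2 - I) * hsqrt2

theorem erf_upper_bound_general (x : ℝ) :
    erf (x / Real.sqrt 2) ≤
      1 - (2 / (x + Real.sqrt (4 + x ^ 2))) * Real.sqrt (2 / Real.pi) *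
        Real.exp (-x ^ 2 / 2) := by
  calc erf (x / √2) = 1 - √(2 / π) * ∫ t in Ioi x, exp (-t ^ 2 / 2) := erf_div_sqrt_two x
    _ ≤ 1 - √(2 / π) * (birnbaumRatio x * exp (-x ^ 2 / 2)) := by
      gcongr
      exact birnbaumRatio_mul_exp_le_integral_Ioi x
    _ = _ := by rw [birnbaumRatio]; ring

theorem erf_upper_bound (x : ℝ) (hx : 0 < x) :
    erf (x / Real.sqrt 2) ≤
      1 - (2 / (x + Real.sqrt (4 + x ^ 2))) * Real.sqrt (2 / Real.pi) *
        Real.exp (-x ^ 2 / 2) :=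
  erf_upper_bound_general x
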